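/- Let c > 0, let R = diag(r_1, …, r_m) with all r_j > 0, let B ∈ ℝ^{N×m}, and let g ∈ ℝ^N. Define D = (1/(2c))·R⁻¹·Bᵀ·g ∈ ℝ^m and u* ∈ ℝ^m with components u*_j = −c·tanh(D_j), and let U(u*) = 2 Σ_{j=1}^m r_j ∫_0^{u*_j} c·artanh(ν/c) dν. Then U(u*) + gᵀ(B·u*) = c² Σ_{j=1}^m r_j·log(1 − tanh²(D_j)). -/

import Mathlib

/-!
Coordinatewise, with `t = tanh d`, the substitution `ν = c s` turns the control cost into
`c² ∫₀ᵗ artanh = c² (t artanh t + ½ log (1 - t²))`, and `artanh t = d`. Since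
`(Bᵀ g)_j = 2 c r_j D_j`, the drift term `-2 c² r_j D_j tanh D_j` cancels the first summand
exactly, leaving only the logarithm.
-/

open Matrix

/-- The inverse hyperbolic tangent: `artanh x = ½ log((1 + x)/(1 − x))`. -/
noncomputable def artanh (x : ℝ) : ℝ := Real.log ((1 + x) / (1 - x)) / 2

open Set

-- Outside `[-1, 1]` Mathlib's `Real.artanh` takes the junk value `log √0 = 0`.
lemma artanh_eq_real_artanh {x : ℝ} (hx : x ∈ Icc (-1) 1) : artanh x = Real.artanh x := by
  rw [Real.artanh_eq_half_log hx, artanh]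
  ring

lemma artanh_tanh (x : ℝ) : artanh (Real.tanh x) = x := by
  rw [artanh_eq_real_artanh ⟨(Real.neg_one_lt_tanh x).le, (Real.tanh_lt_one x).le⟩,
    Real.artanh_tanh]

lemma hasDerivAt_artanh {x : ℝ} (hx : x ∈ Ioo (-1) 1) :
    HasDerivAt artanh (1 / (1 - x ^ 2)) x := by
  obtain ⟨h₁, h₂⟩ : 0 < 1 + x ∧ 0 < 1 - x := ⟨by linarith [hx.1], by linarith [hx.2]⟩
  have hquot : HasDerivAt (fun y => (1 + y) / (1 - y)) (2 / (1 - x) ^ 2) x :=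
    (((hasDerivAt_id x).const_add 1).div ((hasDerivAt_id x).const_sub 1) h₂.ne').congr_deriv
      (by simp only [id_eq]; ring)
  have hsq : 1 - x ^ 2 = (1 + x) * (1 - x) := by ring
  refine ((hquot.log (div_pos h₁ h₂).ne').div_const 2).congr_deriv ?_
  rw [hsq]
  field_simp

lemma hasDerivAt_mul_artanh_add_log {x : ℝ} (hx : x ∈ Ioo (-1) 1) :
    HasDerivAt (fun y => y * artanh y + Real.log (1 - y ^ 2) / 2) (artanh x) x := by
  have hpos : 0 < 1 - x ^ 2 := by nlinarith [hx.1, hx.2]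
  have hlog := (((hasDerivAt_id x).pow 2).const_sub 1).log hpos.ne'
  refine (((hasDerivAt_id x).mul (hasDerivAt_artanh hx)).add (hlog.div_const 2)).congr_deriv ?_
  simp only [id_eq, Pi.pow_apply]
  field_simp
  ring

theorem integral_artanh {x : ℝ} (hx : x ∈ Ioo (-1) 1) :
    ∫ t in (0 : ℝ)..x, artanh t = x * artanh x + Real.log (1 - x ^ 2) / 2 := by
  have hsub : uIcc 0 x ⊆ Ioo (-1) 1 := ordConnected_Ioo.uIcc_subset ⟨by norm_num, by norm_num⟩ hx
  have hcont : ContinuousOn artanh (uIcc 0 x) := fun t ht =>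
    (hasDerivAt_artanh (hsub ht)).continuousAt.continuousWithinAt
  rw [intervalIntegral.integral_eq_sub_of_hasDerivAt
    (fun t ht => hasDerivAt_mul_artanh_add_log (hsub ht)) hcont.intervalIntegrable]
  simp [artanh]

theorem integral_const_mul_artanh_div {c : ℝ} (hc : c ≠ 0) (x : ℝ) :
    ∫ ν in (0 : ℝ)..c * x, c * artanh (ν / c) = c ^ 2 * ∫ t in (0 : ℝ)..x, artanh t := by
  rw [intervalIntegral.integral_const_mul, intervalIntegral.integral_comp_div _ hc,
    zero_div, mul_div_cancel_left₀ _ hc, smul_eq_mul]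
  ring

lemma integral_const_mul_artanh_div_tanh {c : ℝ} (hc : c ≠ 0) (d : ℝ) :
    ∫ ν in (0 : ℝ)..c * Real.tanh d, c * artanh (ν / c) =
      c ^ 2 * (d * Real.tanh d + Real.log (1 - Real.tanh d ^ 2) / 2) := by
  rw [integral_const_mul_artanh_div hc,
    integral_artanh ⟨Real.neg_one_lt_tanh d, Real.tanh_lt_one d⟩, artanh_tanh]
  ring

-- `2 c r d` is the coordinate of `Bᵀ g` that produced `d = (Bᵀ g) / (2 c r)`.
lemma two_mul_integral_artanh_add_mul_eq {c : ℝ} (hc : c ≠ 0) (r d : ℝ) :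
    2 * r * (∫ ν in (0 : ℝ)..-c * Real.tanh d, c * artanh (ν / c)) +
        2 * c * r * d * (-c * Real.tanh d) =
      c ^ 2 * r * Real.log (1 - Real.tanh d ^ 2) := by
  have hneg := integral_const_mul_artanh_div_tanh hc (-d)
  rw [Real.tanh_neg, neg_sq, mul_neg, ← neg_mul] at hneg
  rw [hneg]
  ring

lemma inv_diagonal_of_ne_zero {n K : Type*} [Fintype n] [DecidableEq n] [Field K] {v : n → K}
    (hv : ∀ i, v i ≠ 0) : (diagonal v)⁻¹ = diagonal v⁻¹ := by
  refine inv_eq_right_inv ?_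
  rw [diagonal_mul_diagonal, ← diagonal_one]
  congr 1
  funext i
  exact mul_inv_cancel₀ (hv i)

/-- cancellation identity converting the Hamiltonian (eq. 21) into the
HJI equation (eq. 29): with `D = (1/(2c)) R⁻¹ Bᵀ g` and `u*_j = −c·tanh(D_j)`,
`U(u*) + gᵀ(B u*) = c² ∑_j r_j log(1 − tanh²(D_j))`. -/
theorem stmt_15 (m N : ℕ) (c : ℝ) (hc : 0 < c) (r : Fin m → ℝ) (hr : ∀ j, 0 < r j)
    (B : Matrix (Fin N) (Fin m) ℝ) (g : Fin N → ℝ) :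
    letI D : Fin m → ℝ := (1 / (2 * c)) • ((Matrix.diagonal r)⁻¹ *ᵥ (Bᵀ *ᵥ g))
    letI ustar : Fin m → ℝ := fun j => -c * Real.tanh (D j)
    2 * ∑ j, r j * (∫ ν in (0:ℝ)..(ustar j), c * artanh (ν / c)) + g ⬝ᵥ (B *ᵥ ustar) =
      c ^ 2 * ∑ j, r j * Real.log (1 - Real.tanh (D j) ^ 2) := by
  set D : Fin m → ℝ := (1 / (2 * c)) • ((diagonal r)⁻¹ *ᵥ (Bᵀ *ᵥ g)) with hD
  have hr' : ∀ j, r j ≠ 0 := fun j => (hr j).ne'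
  have hBg : ∀ j, (Bᵀ *ᵥ g) j = 2 * c * r j * D j := by
    intro j
    simp only [hD, inv_diagonal_of_ne_zero hr', mulVec_diagonal, Pi.smul_apply, Pi.inv_apply,
      smul_eq_mul]
    field_simp [hc.ne', hr' j]
  have hdrift : g ⬝ᵥ (B *ᵥ fun j => -c * Real.tanh (D j)) =
      ∑ j, (Bᵀ *ᵥ g) j * (-c * Real.tanh (D j)) := by
    rw [dotProduct_mulVec, ← mulVec_transpose]
    rfl
  rw [hdrift, Finset.mul_sum, Finset.mul_sum, ← Finset.sum_add_distrib]
  refine Finset.sum_congr rfl fun j _ => ?_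
  rw [hBg]
  linear_combination two_mul_integral_artanh_add_mul_eq hc.ne' (r j) (D j)
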